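/- Let f: ℝⁿ → ℝ be convex with level set C = f⁻¹((-∞,0]) ≠ ∅. Define x_{i+1} = x_i - (f(x_i)/‖y_i‖²)·y_i when f(x_i) > 0, where y_i ∈ ∂f(x_i) (the projection of x_i onto the halfspace {x : f(x_i) + ⟨y_i, x - x_i⟩ ≤ 0}). Suppose the sequence {x_i} converges to x̄ with f(x̄) = 0 and 0 ∉ ∂f(x̄), and suppose additionally that x_i → x̄ through the normal cone directions so that for some γ₁ < d(0,∂f(x̄)) and large i, f(x_i) ≥ γ₁‖x_i - x̄‖. Then limsup_{i→∞} ‖x_{i+1} - x̄‖/‖x_i - x̄‖ ≤ √(1 - [γ₁/(2·max_{y∈∂f(x̄)}‖y‖)]²) < 1, i.e., convergence is at least R-linear. -/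

import Mathlib

/-!
Each iterate is the projection of `x i` onto a halfspace containing `xbar`, so
`‖x (i+1) - xbar‖² ≤ ‖x i - xbar‖² - (f (x i) / ‖y i‖)²`. Outer semicontinuity of `∂f` at `xbar`
gives `‖y i‖ ≤ 2 M` eventually, with `M = sup ‖∂f(xbar)‖ > γ₁`, and the slope condition
`f (x i) ≥ γ₁ ‖x i - xbar‖` then contracts `‖x i - xbar‖` by the factor `√(1 - (γ₁ / 2M)²)`.
-/

open RealInnerProductSpace Filter

/-- The convex subdifferential of `f` at `x`. -/
def subdiff {n : ℕ} (f : EuclideanSpace ℝ (Fin n) → ℝ) (x : EuclideanSpace ℝ (Fin n)) :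
    Set (EuclideanSpace ℝ (Fin n)) :=
  {y | ∀ z, f x + ⟪y, z - x⟫ ≤ f z}

section Subdifferential

variable {n : ℕ} {f : EuclideanSpace ℝ (Fin n) → ℝ}

/-- Testing `u ∈ ∂f(x)` at `x + u / ‖u‖` gives `‖u‖ ≤ f (x + u / ‖u‖) - f x`. -/
theorem isBounded_biUnion_subdiff_closedBall (hf : Continuous f)
    (w : EuclideanSpace ℝ (Fin n)) (r : ℝ) :
    Bornology.IsBounded (⋃ x ∈ Metric.closedBall w r, subdiff f x) := by
  obtain ⟨C, hC⟩ :=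
    (isCompact_closedBall w (r + 1)).exists_bound_of_continuousOn hf.continuousOn
  refine isBounded_iff_forall_norm_le.2 ⟨2 * C, ?_⟩
  simp only [Set.mem_iUnion]
  rintro u ⟨x, hx, hu⟩
  have hx' : x ∈ Metric.closedBall w (r + 1) :=
    Metric.closedBall_subset_closedBall (by linarith) hx
  have hz : x + ‖u‖⁻¹ • u ∈ Metric.closedBall w (r + 1) := by
    rw [Metric.mem_closedBall, dist_eq_norm, add_sub_right_comm]
    calc ‖x - w + ‖u‖⁻¹ • u‖ ≤ ‖x - w‖ + ‖‖u‖⁻¹ • u‖ := norm_add_le _ _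
      _ ≤ r + 1 := by
        gcongr
        · rwa [← dist_eq_norm, ← Metric.mem_closedBall]
        · rw [norm_smul, norm_inv, norm_norm]
          exact inv_mul_le_one
  have hinner : ⟪u, x + ‖u‖⁻¹ • u - x⟫ = ‖u‖ := by
    rw [add_sub_cancel_left, real_inner_smul_right, real_inner_self_eq_norm_sq, sq,
      ← div_eq_inv_mul, mul_self_div_self]
  have hsub := hu (x + ‖u‖⁻¹ • u)
  rw [hinner] at hsub
  linarith [abs_le.1 (hC _ hx'), abs_le.1 (hC _ hz)]

theorem mem_subdiff_of_tendsto {ι : Type*} {l : Filter ι} [l.NeBot]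
    {xbar ybar : EuclideanSpace ℝ (Fin n)} {x y : ι → EuclideanSpace ℝ (Fin n)}
    (hf : ContinuousAt f xbar) (hx : Tendsto x l (nhds xbar)) (hy : Tendsto y l (nhds ybar))
    (hmem : ∀ i, y i ∈ subdiff f (x i)) : ybar ∈ subdiff f xbar := fun z =>
  le_of_tendsto ((hf.tendsto.comp hx).add (hy.inner (tendsto_const_nhds.sub hx)))
    (Eventually.of_forall fun i => hmem i z)

/-- Local boundedness yields a convergent subsequence of long subgradients, and its limit lies in
`∂f(xbar)` by closedness of the graph. -/
theorem eventually_norm_lt_of_mem_subdiff (hf : Continuous f) {xbar : EuclideanSpace ℝ (Fin n)}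
    {x y : ℕ → EuclideanSpace ℝ (Fin n)} (hx : Tendsto x atTop (nhds xbar))
    (hy : ∀ i, y i ∈ subdiff f (x i)) {r : ℝ} (hr : ∀ u ∈ subdiff f xbar, ‖u‖ < r) :
    ∀ᶠ i in atTop, ‖y i‖ < r := by
  by_contra h
  have hfreq : ∃ᶠ i in atTop, r ≤ ‖y i‖ ∧ x i ∈ Metric.closedBall xbar 1 :=
    ((not_eventually.1 h).and_eventually (hx (Metric.closedBall_mem_nhds xbar one_pos))).mono
      fun i hi => ⟨not_lt.1 hi.1, hi.2⟩
  obtain ⟨φ, hφ, hφr⟩ := extraction_of_frequently_atTop hfreq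
  obtain ⟨ybar, -, ψ, hψ, hybar⟩ := tendsto_subseq_of_bounded
    (isBounded_biUnion_subdiff_closedBall hf xbar 1) (x := fun k => y (φ k))
    fun k => Set.mem_biUnion (hφr k).2 (hy (φ k))
  have hybarmem : ybar ∈ subdiff f xbar :=
    mem_subdiff_of_tendsto hf.continuousAt (hx.comp (hφ.comp hψ).tendsto_atTop) hybar
      fun k => hy _
  exact (hr ybar hybarmem).not_ge
    (ge_of_tendsto hybar.norm (Eventually.of_forall fun k => (hφr (ψ k)).1))

end Subdifferential

section SubgradientProjection

variable {E : Type*} [NormedAddCommGroup E] [InnerProductSpace ℝ E] {f : E → ℝ} {x xbar y : E}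

theorem le_inner_sub_of_subgradient (hy : ∀ z, f x + ⟪y, z - x⟫ ≤ f z) (hxbar : f xbar ≤ 0) :
    f x ≤ ⟪y, x - xbar⟫ := by
  have := hy xbar
  rw [← neg_sub, inner_neg_right] at this
  linarith

theorem norm_pos_of_subgradient (hy : ∀ z, f x + ⟪y, z - x⟫ ≤ f z) (hxbar : f xbar ≤ 0)
    (hfx : 0 < f x) : 0 < ‖y‖ := by
  have hinner := le_inner_sub_of_subgradient hy hxbar
  refine norm_pos_iff.2 fun h => ?_
  rw [h, inner_zero_left] at hinner
  linarith

/-- The step is the projection of `x` onto the halfspace `{z | f x + ⟪y, z - x⟫ ≤ 0}`,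
which contains `xbar`. -/
theorem norm_subgradient_step_sub_sq_le (hy : ∀ z, f x + ⟪y, z - x⟫ ≤ f z) (hxbar : f xbar ≤ 0)
    (hfx : 0 < f x) :
    ‖x - (f x / ‖y‖ ^ 2) • y - xbar‖ ^ 2 ≤ ‖x - xbar‖ ^ 2 - (f x / ‖y‖) ^ 2 := by
  have hy0 := (norm_pos_of_subgradient hy hxbar hfx).ne'
  have hexpand : ‖x - (f x / ‖y‖ ^ 2) • y - xbar‖ ^ 2 =
      ‖x - xbar‖ ^ 2 - 2 * (f x / ‖y‖ ^ 2) * ⟪y, x - xbar⟫ + (f x / ‖y‖) ^ 2 := by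
    rw [sub_right_comm, norm_sub_sq_real, real_inner_smul_right, norm_smul, Real.norm_eq_abs,
      mul_pow, sq_abs, real_inner_comm]
    field_simp
  have hstep : 2 * (f x / ‖y‖) ^ 2 ≤ 2 * (f x / ‖y‖ ^ 2) * ⟪y, x - xbar⟫ :=
    calc 2 * (f x / ‖y‖) ^ 2 = 2 * (f x / ‖y‖ ^ 2) * f x := by field_simp
      _ ≤ _ := by gcongr; exact le_inner_sub_of_subgradient hy hxbar
  linarith

theorem norm_subgradient_step_sub_le (hy : ∀ z, f x + ⟪y, z - x⟫ ≤ f z) (hxbar : f xbar ≤ 0)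
    (hfx : 0 < f x) {γ L : ℝ} (hγ : 0 ≤ γ) (hyL : ‖y‖ ≤ L) (hslope : γ * ‖x - xbar‖ ≤ f x) :
    ‖x - (f x / ‖y‖ ^ 2) • y - xbar‖ ≤ Real.sqrt (1 - (γ / L) ^ 2) * ‖x - xbar‖ := by
  have hy0 := norm_pos_of_subgradient hy hxbar hfx
  have hrate : γ / L * ‖x - xbar‖ ≤ f x / ‖y‖ :=
    calc γ / L * ‖x - xbar‖ = γ * ‖x - xbar‖ / L := div_mul_eq_mul_div _ _ _
      _ ≤ f x / L := by gcongr; linarith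
      _ ≤ f x / ‖y‖ := by gcongr
  have hsq : ‖x - (f x / ‖y‖ ^ 2) • y - xbar‖ ^ 2 ≤ (1 - (γ / L) ^ 2) * ‖x - xbar‖ ^ 2 := by
    have := pow_le_pow_left₀ (mul_nonneg (div_nonneg hγ (hy0.le.trans hyL)) (norm_nonneg _))
      hrate 2
    rw [mul_pow] at this
    linarith [norm_subgradient_step_sub_sq_le hy hxbar hfx]
  calc ‖x - (f x / ‖y‖ ^ 2) • y - xbar‖ = Real.sqrt (‖x - (f x / ‖y‖ ^ 2) • y - xbar‖ ^ 2) :=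
        (Real.sqrt_sq (norm_nonneg _)).symm
    _ ≤ Real.sqrt ((1 - (γ / L) ^ 2) * ‖x - xbar‖ ^ 2) := Real.sqrt_le_sqrt hsq
    _ = Real.sqrt (1 - (γ / L) ^ 2) * ‖x - xbar‖ := by
        rw [Real.sqrt_mul' _ (sq_nonneg _), Real.sqrt_sq (norm_nonneg _)]

end SubgradientProjection

theorem Bornology.IsBounded.bddAbove_norm_image {E : Type*} [SeminormedAddCommGroup E]
    {S : Set E} (hS : Bornology.IsBounded S) : BddAbove (norm '' S) := by
  obtain ⟨C, hC⟩ := isBounded_iff_forall_norm_le.1 hS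
  exact ⟨C, Set.forall_mem_image.2 hC⟩

theorem lt_sSup_norm_image_of_lt_infDist {E : Type*} [SeminormedAddCommGroup E] {S : Set E}
    (hS : Bornology.IsBounded S) {γ : ℝ} (hγ : 0 < γ) (hγS : γ < Metric.infDist 0 S) :
    γ < sSup (norm '' S) := by
  obtain ⟨u, hu⟩ : S.Nonempty := by
    by_contra h
    rw [Set.not_nonempty_iff_eq_empty.1 h, Metric.infDist_empty] at hγS
    linarith
  calc γ < Metric.infDist 0 S := hγS
    _ ≤ ‖u‖ := by simpa using Metric.infDist_le_dist_of_mem (x := 0) hu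
    _ ≤ sSup (norm '' S) := le_csSup hS.bddAbove_norm_image ⟨u, hu, rfl⟩

theorem limsup_div_le_of_eventually_le_mul {ι : Type*} {l : Filter ι} [l.NeBot]
    {u v : ι → ℝ} {ρ : ℝ}
    (hu : ∀ i, 0 ≤ u i) (hv : ∀ i, 0 ≤ v i) (hρ : 0 ≤ ρ) (h : ∀ᶠ i in l, u i ≤ ρ * v i) :
    limsup (fun i => u i / v i) l ≤ ρ :=
  limsup_le_of_le (isBoundedUnder_of ⟨0, fun i => div_nonneg (hu i) (hv i)⟩).isCoboundedUnder_le
    (h.mono fun i hi => div_le_of_le_mul₀ (hv i) hρ hi)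

theorem subgradient_projection_linear_convergence_general
    {n : ℕ} (f : EuclideanSpace ℝ (Fin n) → ℝ)
    (hconv : ConvexOn ℝ Set.univ f)
    (x y : ℕ → EuclideanSpace ℝ (Fin n))
    (hy : ∀ i, y i ∈ subdiff f (x i))
    (hfx : ∀ i, 0 < f (x i))
    (hiter : ∀ i, x (i + 1) = x i - (f (x i) / ‖y i‖ ^ 2) • y i)
    (xbar : EuclideanSpace ℝ (Fin n))
    (hlim : Tendsto x atTop (nhds xbar))
    (hfxbar : f xbar = 0)
    (γ₁ : ℝ) (hγ₁pos : 0 < γ₁)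
    (hγ₁ : γ₁ < Metric.infDist 0 (subdiff f xbar))
    (hslope : ∃ I, ∀ i ≥ I, γ₁ * ‖x i - xbar‖ ≤ f (x i)) :
    limsup (fun i => ‖x (i + 1) - xbar‖ / ‖x i - xbar‖) atTop ≤
        Real.sqrt (1 - (γ₁ / (2 * sSup (norm '' subdiff f xbar))) ^ 2) ∧
      Real.sqrt (1 - (γ₁ / (2 * sSup (norm '' subdiff f xbar))) ^ 2) < 1 := by
  set S := subdiff f xbar
  set M := sSup (norm '' S)
  have hcont : Continuous f := continuousOn_univ.1 (hconv.continuousOn isOpen_univ)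
  have hS : Bornology.IsBounded S := (isBounded_biUnion_subdiff_closedBall hcont xbar 0).subset
    (Set.subset_biUnion_of_mem (u := subdiff f) (Metric.mem_closedBall_self le_rfl))
  have hγM : γ₁ < M := lt_sSup_norm_image_of_lt_infDist hS hγ₁pos hγ₁
  have hy2M : ∀ᶠ i in atTop, ‖y i‖ < 2 * M := eventually_norm_lt_of_mem_subdiff hcont hlim hy
    fun u hu => (le_csSup hS.bddAbove_norm_image ⟨u, hu, rfl⟩).trans_lt (by linarith)
  obtain ⟨I, hI⟩ := hslope
  refine ⟨limsup_div_le_of_eventually_le_mul (fun _ => norm_nonneg _) (fun _ => norm_nonneg _)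
    (Real.sqrt_nonneg _) ?_, ?_⟩
  · filter_upwards [hy2M, eventually_ge_atTop I] with i hyi hiI
    rw [hiter i]
    exact norm_subgradient_step_sub_le (hy i) hfxbar.le (hfx i) hγ₁pos.le hyi.le (hI i hiI)
  · rw [Real.sqrt_lt' one_pos]
    have hq : 0 < γ₁ / (2 * M) := div_pos hγ₁pos (by linarith)
    linarith [pow_pos hq 2]

/-- Linear convergence of the subgradient projection iteration for the convex
inequality problem. -/
theorem subgradient_projection_linear_convergence
    {n : ℕ} (f : EuclideanSpace ℝ (Fin n) → ℝ)
    (hconv : ConvexOn ℝ Set.univ f)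
    (hfeas : {z | f z ≤ 0}.Nonempty)
    (x y : ℕ → EuclideanSpace ℝ (Fin n))
    (hy : ∀ i, y i ∈ subdiff f (x i))
    (hfx : ∀ i, 0 < f (x i)) (hy0 : ∀ i, y i ≠ 0)
    (hiter : ∀ i, x (i + 1) = x i - (f (x i) / ‖y i‖ ^ 2) • y i)
    (xbar : EuclideanSpace ℝ (Fin n))
    (hlim : Tendsto x atTop (nhds xbar))
    (hfxbar : f xbar = 0)
    (h0 : (0:EuclideanSpace ℝ (Fin n)) ∉ subdiff f xbar)
    (γ₁ : ℝ) (hγ₁pos : 0 < γ₁)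
    (hγ₁ : γ₁ < Metric.infDist 0 (subdiff f xbar))
    (hslope : ∃ I, ∀ i ≥ I, γ₁ * ‖x i - xbar‖ ≤ f (x i)) :
    limsup (fun i => ‖x (i + 1) - xbar‖ / ‖x i - xbar‖) atTop ≤
        Real.sqrt (1 - (γ₁ / (2 * sSup (norm '' subdiff f xbar))) ^ 2) ∧
      Real.sqrt (1 - (γ₁ / (2 * sSup (norm '' subdiff f xbar))) ^ 2) < 1 :=
  subgradient_projection_linear_convergence_general f hconv x y hy hfx hiter xbar hlim hfxbar γ₁
    hγ₁pos hγ₁ hslope
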